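/- arXiv:2409.18629 — 5 statements merged into one kernel-verified Lean document; each statement's English description precedes it below -/
import Mathlib

section
/- Let θ ∈ (0,1) and L > 0. There exists a constant C = C(L, θ) > 0, independent of the mesh size, such that for every h ∈ (0,1), every integer M_x ≥ 1 with (M_x+1)h = L, and every u : ℤ → ℝ with u_i = 0 for |i| > M_x, one has the discrete Poincaré inequality ∑_{i∈ℤ} h u_i² ≤ C ∑_{i∈ℤ} ∑_{j≠i} h² |u_i − u_j|² / (h|i−j|)^{1+2θ}. -/
/-!
A function supported in `[-M, M]` vanishes on the `M + 1` nodes `j ∈ [M + 1, 2M + 1]`, all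
within distance `3L` of the support, where `L = (M + 1) h`. So for `i` in the support these
nodes alone contribute at least `(M + 1) h² uᵢ² / (3L)^s = L · h uᵢ² / (3L)^s` to the Gagliardo
sum, with `s = 1 + 2θ`. Discarding the other (nonnegative) terms is legitimate because
`|uᵢ - uⱼ|² ≤ 2(uᵢ² + uⱼ²)` and `|i - j|^{-s}` is summable for `s > 1`, so the double series
converges.
-/

open Finset

/-- The `(i, j)` summand of `[u]²_{W^{θ,2}_h}`, with `s = 1 + 2θ`. -/
noncomputable def gagliardoSqTerm (h s : ℝ) (u : ℤ → ℝ) (i j : ℤ) : ℝ :=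
  if j = i then 0 else h ^ 2 * |u i - u j| ^ 2 / (h * |(i : ℝ) - (j : ℝ)|) ^ s

lemma summable_mul_comp_sub {G : Type*} [AddGroup G] {a k : G → ℝ} (ha : Summable a)
    (hk : Summable k) (ha0 : 0 ≤ a) (hk0 : 0 ≤ k) :
    Summable fun p : G × G => a p.1 * k (p.1 - p.2) :=
  (Equiv.prodShear (Equiv.refl G) Equiv.subLeft).summable_iff.2
    (ha.mul_of_nonneg hk ha0 hk0)

namespace gagliardoSqTerm

variable {h s : ℝ} {u : ℤ → ℝ}

lemma nonneg (hh : 0 ≤ h) (i j : ℤ) : 0 ≤ gagliardoSqTerm h s u i j := by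
  unfold gagliardoSqTerm
  split_ifs
  · exact le_rfl
  · positivity

lemma le_mul_rpow_neg (hh : 0 ≤ h) (i j : ℤ) :
    gagliardoSqTerm h s u i j ≤
      2 * h ^ 2 * h ^ (-s) * ((u i ^ 2 + u j ^ 2) * |((i - j : ℤ) : ℝ)| ^ (-s)) := by
  unfold gagliardoSqTerm
  split_ifs with hji
  · positivity
  have hdist : 0 < |(i : ℝ) - j| := abs_pos.2 (sub_ne_zero.2 (by exact_mod_cast Ne.symm hji))
  have hdiff : |u i - u j| ^ 2 ≤ 2 * (u i ^ 2 + u j ^ 2) := by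
    rw [sq_abs]; nlinarith [sq_nonneg (u i + u j)]
  rw [Real.mul_rpow hh hdist.le, Real.rpow_neg hh, Int.cast_sub, Real.rpow_neg hdist.le,
    ← div_div]
  calc h ^ 2 * |u i - u j| ^ 2 / h ^ s / |(i : ℝ) - j| ^ s
      ≤ h ^ 2 * (2 * (u i ^ 2 + u j ^ 2)) / h ^ s / |(i : ℝ) - j| ^ s := by gcongr
    _ = _ := by ring

lemma summable (hh : 0 ≤ h) (hs : 1 < s) (hu : Summable fun i => u i ^ 2) :
    Summable fun p : ℤ × ℤ => gagliardoSqTerm h s u p.1 p.2 := by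
  set k : ℤ → ℝ := fun d => |(d : ℝ)| ^ (-s)
  have hk0 : 0 ≤ k := fun d => by positivity
  have hA := summable_mul_comp_sub hu (Real.summable_abs_int_rpow hs) (fun i => sq_nonneg _) hk0
  have hB : Summable fun p : ℤ × ℤ => u p.2 ^ 2 * k (p.1 - p.2) := by
    refine ((Equiv.prodComm ℤ ℤ).summable_iff.2 hA).congr fun p => ?_
    simp only [Function.comp_apply, Equiv.prodComm_apply, Prod.fst_swap, Prod.snd_swap, k,
      Int.cast_sub, abs_sub_comm]
  refine .of_nonneg_of_le (fun p => nonneg hh _ _) (fun p => le_mul_rpow_neg hh _ _) ?_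
  exact ((hA.add hB).mul_left (2 * h ^ 2 * h ^ (-s))).congr fun p => by simp only [k]; ring

lemma sq_div_rpow_le (hh : 0 < h) (hs : 0 ≤ s) {i j : ℤ} (hji : j ≠ i) (huj : u j = 0) {R : ℝ}
    (hR : h * |(i : ℝ) - j| ≤ R) :
    h ^ 2 * u i ^ 2 / R ^ s ≤ gagliardoSqTerm h s u i j := by
  have hdist : 0 < |(i : ℝ) - j| := abs_pos.2 (sub_ne_zero.2 (by exact_mod_cast Ne.symm hji))
  rw [gagliardoSqTerm, if_neg hji, huj, sub_zero, sq_abs]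
  gcongr

end gagliardoSqTerm

theorem tsum_mul_sq_le_of_support {h s : ℝ} {u : ℤ → ℝ} {M : ℤ} (hh : 0 < h) (hs : 1 < s)
    (hM : 0 ≤ M) (hu : ∀ i : ℤ, M < |i| → u i = 0) :
    ∑' i : ℤ, h * u i ^ 2 ≤ (3 * ((M + 1) * h)) ^ s / ((M + 1) * h) *
      ∑' i : ℤ, ∑' j : ℤ, gagliardoSqTerm h s u i j := by
  set ℓ : ℝ := (M + 1) * h
  have hℓ : 0 < ℓ := by
    have : (0 : ℝ) ≤ M := by exact_mod_cast hM
    positivity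
  set I := Icc (-M) M
  set J := Icc (M + 1) (2 * M + 1)
  have hvanish : ∀ i ∉ I, u i = 0 := fun i hi => hu i <| by
    rw [mem_Icc, not_and_or, not_le, not_le] at hi
    exact lt_abs.2 (hi.symm.imp id (by omega))
  have hJ : (#J : ℝ) = M + 1 := by
    rw [Int.card_Icc, show 2 * M + 1 + 1 - (M + 1) = M + 1 by ring]
    exact_mod_cast Int.toNat_of_nonneg (by omega : 0 ≤ M + 1)
  have hrow : ∀ i ∈ I, ℓ * (h * u i ^ 2) / (3 * ℓ) ^ s ≤ ∑ j ∈ J, gagliardoSqTerm h s u i j := by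
    intro i hi
    calc ℓ * (h * u i ^ 2) / (3 * ℓ) ^ s = ∑ _j ∈ J, h ^ 2 * u i ^ 2 / (3 * ℓ) ^ s := by
          rw [sum_const, nsmul_eq_mul, hJ]; ring
      _ ≤ _ := sum_le_sum fun j hj => by
          rw [mem_Icc] at hi hj
          refine gagliardoSqTerm.sq_div_rpow_le hh (by linarith) (by omega)
            (hu j (lt_abs.2 (.inl (by omega)))) ?_
          have hi' : (-M : ℝ) ≤ i := by exact_mod_cast hi.1
          have hj' : (j : ℝ) ≤ 2 * M + 1 := by exact_mod_cast hj.2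
          have hij : (i : ℝ) < j := by exact_mod_cast (by omega : i < j)
          rw [abs_of_neg (sub_neg.2 hij)]
          nlinarith
  have hF := gagliardoSqTerm.summable (s := s) hh.le hs
    (summable_of_ne_finset_zero (f := fun i => u i ^ 2) (s := I) fun i hi => by simp [hvanish i hi])
  calc ∑' i : ℤ, h * u i ^ 2
      = (3 * ℓ) ^ s / ℓ * ∑ i ∈ I, ℓ * (h * u i ^ 2) / (3 * ℓ) ^ s := by
        rw [tsum_eq_sum fun i hi => by simp [hvanish i hi], mul_sum]
        refine sum_congr rfl fun i _ => ?_
        field_simp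
    _ ≤ (3 * ℓ) ^ s / ℓ * ∑ p ∈ I ×ˢ J, gagliardoSqTerm h s u p.1 p.2 := by
        rw [sum_product]
        gcongr with i hi
        exact hrow i hi
    _ ≤ (3 * ℓ) ^ s / ℓ * ∑' i : ℤ, ∑' j : ℤ, gagliardoSqTerm h s u i j := by
        rw [← hF.tsum_prod]
        gcongr
        exact hF.sum_le_tsum _ fun p _ => gagliardoSqTerm.nonneg hh.le _ _

theorem stmt2_general (θ L : ℝ) (hθ0 : 0 < θ) (hL : 0 < L) :
    ∃ C : ℝ, 0 < C ∧
      ∀ h : ℝ, 0 < h → h < 1 → ∀ Mx : ℤ, 1 ≤ Mx → ((Mx : ℝ) + 1) * h = L →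
        ∀ u : ℤ → ℝ, (∀ i : ℤ, Mx < |i| → u i = 0) →
          ∑' i : ℤ, h * (u i) ^ 2 ≤
            C * ∑' i : ℤ, ∑' j : ℤ, if j = i then 0 else
                h ^ 2 * |u i - u j| ^ 2 / (h * |(i : ℝ) - (j : ℝ)|) ^ (1 + 2 * θ) := by
  refine ⟨(3 * L) ^ (1 + 2 * θ) / L, by positivity, fun h hh _ Mx hMx hL' u hu => ?_⟩
  rw [← hL']
  exact tsum_mul_sq_le_of_support hh (by linarith) (by omega) hu

theorem stmt2 (θ L : ℝ) (hθ0 : 0 < θ) (hθ1 : θ < 1) (hL : 0 < L) :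
    ∃ C : ℝ, 0 < C ∧
      ∀ h : ℝ, 0 < h → h < 1 → ∀ Mx : ℤ, 1 ≤ Mx → ((Mx : ℝ) + 1) * h = L →
        ∀ u : ℤ → ℝ, (∀ i : ℤ, Mx < |i| → u i = 0) →
          ∑' i : ℤ, h * (u i) ^ 2 ≤
            C * ∑' i : ℤ, ∑' j : ℤ, if j = i then 0 else
                h ^ 2 * |u i - u j| ^ 2 / (h * |(i : ℝ) - (j : ℝ)|) ^ (1 + 2 * θ) :=
  stmt2_general θ L hθ0 hL
end

section
/- Let p ≥ 1, θ ∈ (0,1), h > 0, let A ⊂ ℤ be a finite nonempty set, and fix i ∈ A. Then ∑_{j∈ℤ∖A} h / (h|i−j|)^{1+pθ} ≥ C(p,θ) (|A|h)^{−pθ}, where |A| is the cardinality of A and one may take the explicit constant C(p,θ) = (2/(pθ)) (2/3)^{pθ}, which depends only on p and θ (and not on i, A, or h). -/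
open scoped ENNReal

-- rearrangement lemma
lemma rearr_aux (f : ℕ → ℝ≥0∞) (hmono : ∀ a b : ℕ, a ≤ b → f b ≤ f a)
    (hfin : ∀ n, f n ≠ ⊤) :
    ∀ (n : ℕ) (S : Finset ℕ), S.card = n →
      (∑' d : ℕ, f (d + n)) ≤ ∑' d : ℕ, if d ∈ S then 0 else f d := by
  intro n
  induction n with
  | zero =>
    intro S hS
    rw [Finset.card_eq_zero] at hS
    subst hS
    simp
  | succ n ih =>
    intro S hS
    have hne : S.Nonempty := Finset.card_pos.mp (by omega)
    set a := S.max' hne with ha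
    have haS : a ∈ S := S.max'_mem hne
    have hcard : (S.erase a).card = n := by
      rw [Finset.card_erase_of_mem haS, hS]
      omega
    have han : n ≤ a := by
      have hsub : S ⊆ Finset.range (a + 1) := fun x hx =>
        Finset.mem_range.mpr (Nat.lt_succ_of_le (S.le_max' x hx))
      have := Finset.card_le_card hsub
      rw [hS, Finset.card_range] at this
      omega
    have h1 : (∑' d : ℕ, f (d + n)) ≤ ∑' d : ℕ, if d ∈ S.erase a then 0 else f d :=
      ih _ hcard
    have h2 : (∑' d : ℕ, if d ∈ S.erase a then 0 else f d)
        = f a + ∑' d : ℕ, if d ∈ S then 0 else f d := by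
      rw [ENNReal.tsum_eq_add_tsum_ite a]
      congr 1
      · simp [haS]
      · apply tsum_congr; intro b
        by_cases hb : b = a
        · simp [hb, haS]
        · simp [hb, Finset.mem_erase]
    have h3 : (∑' d : ℕ, f (d + n)) = f n + ∑' d : ℕ, f (d + (n + 1)) := by
      rw [tsum_eq_zero_add' (f := fun d => f (d + n)) ENNReal.summable]
      congr 1
      · simp
      · apply tsum_congr; intro b; congr 1; omega
    have key : f n + (∑' d : ℕ, f (d + (n + 1)))
        ≤ f n + ∑' d : ℕ, if d ∈ S then 0 else f d := by
      calc f n + (∑' d : ℕ, f (d + (n + 1))) = ∑' d : ℕ, f (d + n) := h3.symm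
        _ ≤ f a + ∑' d : ℕ, if d ∈ S then 0 else f d := h2 ▸ h1
        _ ≤ f n + ∑' d : ℕ, if d ∈ S then 0 else f d := by
            gcongr
            exact hmono n a han
    exact (ENNReal.add_le_add_iff_left (hfin n)).mp key

-- Bernoulli-type bound: 1 - (1+u)^(-s) ≤ s * u for u > 0, s > 0
lemma bern_aux (s u : ℝ) (hs : 0 < s) (hu : 0 < u) :
    1 - s * u ≤ (1 + u) ^ (-s) := by
  have h1 : 1 - s * u ≤ Real.exp (-(s * u)) := by
    have := Real.add_one_le_exp (-(s * u))
    linarith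
  have h2 : Real.exp (-(s * u)) ≤ (1 + u) ^ (-s) := by
    rw [Real.rpow_def_of_pos (by linarith)]
    apply Real.exp_le_exp.mpr
    have hlog : Real.log (1 + u) ≤ u := by
      have := Real.log_le_sub_one_of_pos (x := 1 + u) (by linarith)
      linarith
    nlinarith [Real.log_nonneg (by linarith : (1:ℝ) ≤ 1 + u)]
  linarith

-- tail sum bound
lemma tail_aux (s h : ℝ) (hs : 0 < s) (hh : 0 < h) (m : ℕ) (hm : 1 ≤ m) :
    ENNReal.ofReal (s⁻¹ * (h * m) ^ (-s)) ≤
      ∑' d : ℕ, ENNReal.ofReal (h / (h * ((d : ℝ) + m)) ^ (1 + s)) := by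
  have hm1 : (1:ℝ) ≤ (m:ℝ) := by exact_mod_cast hm
  set g : ℕ → ℝ := fun d => s⁻¹ * (h * ((d : ℝ) + m)) ^ (-s) with hg
  have hxpos : ∀ d : ℕ, (0:ℝ) < (d : ℝ) + m := by
    intro d
    have h0 : (0:ℝ) ≤ (d:ℝ) := Nat.cast_nonneg d
    linarith
  have hanti : ∀ d : ℕ, g (d + 1) ≤ g d := by
    intro d
    have h1 : (0:ℝ) < h * ((d : ℝ) + m) := by positivity
    apply mul_le_mul_of_nonneg_left _ (by positivity)
    apply Real.rpow_le_rpow_of_nonpos h1 _ (by linarith)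
    push_cast
    nlinarith
  -- termwise bound
  have hterm : ∀ d : ℕ, g d - g (d + 1) ≤ h / (h * ((d : ℝ) + m)) ^ (1 + s) := by
    intro d
    set x : ℝ := (d : ℝ) + m with hx
    have hx1 : (1:ℝ) ≤ x := by
      have h0 : (0:ℝ) ≤ (d:ℝ) := Nat.cast_nonneg d
      simp only [hx]; linarith
    have hxpos' : (0:ℝ) < x := by linarith
    have hhx : (0:ℝ) < h * x := by positivity
    have hgd1 : g (d + 1) = s⁻¹ * ((h * x) ^ (-s) * (1 + 1/x) ^ (-s)) := by
      simp only [hg]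
      rw [← Real.mul_rpow hhx.le (by positivity)]
      congr 2
      push_cast
      field_simp
      ring
    have e2 : h / (h * x) ^ (1 + s) = (h * x) ^ (-s) / x := by
      rw [Real.rpow_add hhx, Real.rpow_one, Real.rpow_neg hhx.le]
      field_simp
    have hb : 1 - s * (1/x) ≤ (1 + 1/x) ^ (-s) := bern_aux s (1/x) hs (by positivity)
    have hrp : (0:ℝ) ≤ (h * x) ^ (-s) := Real.rpow_nonneg hhx.le _
    rw [hgd1, e2]
    have expand : g d = s⁻¹ * (h * x) ^ (-s) := rfl
    rw [expand]
    have key : s⁻¹ * (h * x) ^ (-s) - s⁻¹ * ((h * x) ^ (-s) * (1 + 1/x) ^ (-s))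
        = s⁻¹ * (h * x) ^ (-s) * (1 - (1 + 1/x) ^ (-s)) := by ring
    rw [key]
    have h1 : 1 - (1 + 1/x) ^ (-s) ≤ s * (1/x) := by linarith
    have h2 : s⁻¹ * (h * x) ^ (-s) * (1 - (1 + 1/x) ^ (-s))
        ≤ s⁻¹ * (h * x) ^ (-s) * (s * (1/x)) := by
      have hnn : (0:ℝ) ≤ s⁻¹ * (h * x) ^ (-s) := by positivity
      exact mul_le_mul_of_nonneg_left h1 hnn
    calc s⁻¹ * (h * x) ^ (-s) * (1 - (1 + 1/x) ^ (-s))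
        ≤ s⁻¹ * (h * x) ^ (-s) * (s * (1/x)) := h2
      _ = (h * x) ^ (-s) / x := by field_simp
  -- partial sums
  have hpartial : ∀ M : ℕ, ENNReal.ofReal (g 0 - g M) ≤
      ∑' d : ℕ, ENNReal.ofReal (h / (h * ((d : ℝ) + m)) ^ (1 + s)) := by
    intro M
    have e1 : g 0 - g M = ∑ d ∈ Finset.range M, (g d - g (d + 1)) :=
      (Finset.sum_range_sub' g M).symm
    rw [e1]
    calc ENNReal.ofReal (∑ d ∈ Finset.range M, (g d - g (d + 1)))
        = ∑ d ∈ Finset.range M, ENNReal.ofReal (g d - g (d + 1)) :=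
          ENNReal.ofReal_sum_of_nonneg (fun d _ => by linarith [hanti d])
      _ ≤ ∑ d ∈ Finset.range M, ENNReal.ofReal (h / (h * ((d : ℝ) + m)) ^ (1 + s)) := by
          apply Finset.sum_le_sum
          intro d _
          exact ENNReal.ofReal_le_ofReal (hterm d)
      _ ≤ ∑' d : ℕ, ENNReal.ofReal (h / (h * ((d : ℝ) + m)) ^ (1 + s)) :=
          ENNReal.sum_le_tsum _
  -- limit
  have hg0 : g 0 = s⁻¹ * (h * m) ^ (-s) := by simp [hg]
  have htend0 : Filter.Tendsto g Filter.atTop (nhds 0) := by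
    have h1 : Filter.Tendsto (fun M : ℕ => h * ((M : ℝ) + m)) Filter.atTop Filter.atTop := by
      apply Filter.Tendsto.const_mul_atTop hh
      exact Filter.tendsto_atTop_add_const_right _ _ tendsto_natCast_atTop_atTop
    have h2 := (tendsto_rpow_neg_atTop hs).comp h1
    have h3 := h2.const_mul s⁻¹
    simpa [hg] using h3
  have htend : Filter.Tendsto (fun M : ℕ => ENNReal.ofReal (g 0 - g M)) Filter.atTop
      (nhds (ENNReal.ofReal (g 0))) := by
    apply (ENNReal.continuous_ofReal.tendsto _).comp
    have := (tendsto_const_nhds (x := g 0) (f := Filter.atTop (α := ℕ))).sub htend0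
    simpa using this
  rw [← hg0]
  exact le_of_tendsto' htend hpartial

theorem stmt5 (p θ h : ℝ) (hp : 1 ≤ p) (hθ0 : 0 < θ) (hθ1 : θ < 1) (hh : 0 < h)
    (A : Finset ℤ) (hA : A.Nonempty) (i : ℤ) (hi : i ∈ A) :
    ENNReal.ofReal ((2 / (p * θ)) * (2 / 3 : ℝ) ^ (p * θ) * ((A.card : ℝ) * h) ^ (-(p * θ))) ≤
      ∑' j : ℤ, if j ∈ A then 0 else
        ENNReal.ofReal (h / (h * |(i : ℝ) - (j : ℝ)|) ^ (1 + p * θ)) := by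
  set s : ℝ := p * θ with hsdef
  have hs : 0 < s := mul_pos (lt_of_lt_of_le one_pos hp) hθ0
  set N : ℕ := A.card with hNdef
  have hN : 1 ≤ N := Finset.card_pos.mpr hA
  set F : ℤ → ℝ≥0∞ := fun j => if j ∈ A then 0 else
    ENNReal.ofReal (h / (h * |(i : ℝ) - (j : ℝ)|) ^ (1 + s)) with hF
  set f : ℕ → ℝ≥0∞ := fun k => ENNReal.ofReal (h / (h * ((k : ℝ) + 1)) ^ (1 + s)) with hf
  have hfmono : ∀ a b : ℕ, a ≤ b → f b ≤ f a := by
    intro a b hab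
    apply ENNReal.ofReal_le_ofReal
    have h1 : (0:ℝ) < h * ((a : ℝ) + 1) := by positivity
    have h2 : (0:ℝ) < h * ((a : ℝ) + 1) ^ (1 + s) := by positivity
    gcongr
  have hffin : ∀ n, f n ≠ ⊤ := fun n => ENNReal.ofReal_ne_top
  -- the two "half" sums
  have main_half : ∀ (S : Finset ℕ) (e : ℕ → ℤ),
      (∀ d : ℕ, (e d ∈ A ↔ d ∈ S)) → (∀ d : ℕ, |(i : ℝ) - (e d : ℝ)| = (d : ℝ) + 1) →
      S.card + 1 ≤ N →
      ENNReal.ofReal (s⁻¹ * (h * (N : ℝ)) ^ (-s)) ≤ ∑' d : ℕ, F (e d) := by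
    intro S e hmem habs hcard
    have step1 : (∑' d : ℕ, F (e d)) = ∑' d : ℕ, (if d ∈ S then 0 else f d) := by
      apply tsum_congr
      intro d
      simp only [hF, hf, habs d]
      by_cases hd : d ∈ S
      · simp [hd, (hmem d).mpr hd]
      · have : e d ∉ A := fun hc => hd ((hmem d).mp hc)
        simp [hd, this]
    have step2 : (∑' d : ℕ, f (d + S.card)) ≤ ∑' d : ℕ, (if d ∈ S then 0 else f d) :=
      rearr_aux f hfmono hffin S.card S rfl
    have step3 : (∑' d : ℕ, f (d + S.card)) =
        ∑' d : ℕ, ENNReal.ofReal (h / (h * ((d : ℝ) + ((S.card + 1 : ℕ) : ℝ))) ^ (1 + s)) := by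
      apply tsum_congr
      intro d
      simp only [hf]
      congr 2
      push_cast
      ring
    have step4 := tail_aux s h hs hh (S.card + 1) (by omega)
    have step5 : ENNReal.ofReal (s⁻¹ * (h * (N : ℝ)) ^ (-s)) ≤
        ENNReal.ofReal (s⁻¹ * (h * ((S.card + 1 : ℕ) : ℝ)) ^ (-s)) := by
      apply ENNReal.ofReal_le_ofReal
      have hc1 : (0:ℝ) < h * ((S.card + 1 : ℕ) : ℝ) := by positivity
      have hc2 : h * ((S.card + 1 : ℕ) : ℝ) ≤ h * (N : ℝ) := by
        have : ((S.card + 1 : ℕ) : ℝ) ≤ (N : ℝ) := by exact_mod_cast hcard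
        nlinarith
      have := Real.rpow_le_rpow_of_nonpos hc1 hc2 (by linarith : -s ≤ 0)
      have hsi : (0:ℝ) ≤ s⁻¹ := by positivity
      nlinarith
    calc ENNReal.ofReal (s⁻¹ * (h * (N : ℝ)) ^ (-s))
        ≤ ENNReal.ofReal (s⁻¹ * (h * ((S.card + 1 : ℕ) : ℝ)) ^ (-s)) := step5
      _ ≤ ∑' d : ℕ, ENNReal.ofReal (h / (h * ((d : ℝ) + ((S.card + 1 : ℕ) : ℝ))) ^ (1 + s)) :=
          step4
      _ = ∑' d : ℕ, f (d + S.card) := step3.symm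
      _ ≤ ∑' d : ℕ, (if d ∈ S then 0 else f d) := step2
      _ = ∑' d : ℕ, F (e d) := step1.symm
  -- positive-side finset
  have build : ∀ (P : ℤ → Prop) [DecidablePred P], True := fun _ _ => trivial
  clear build
  set Sp : Finset ℕ := (A.filter (fun a => i < a)).image (fun a => (a - i - 1).toNat) with hSp
  set Sm : Finset ℕ := (A.filter (fun a => a < i)).image (fun a => (i - a - 1).toNat) with hSm
  have hSpcard : Sp.card + 1 ≤ N := by
    have h1 : Sp.card ≤ (A.filter (fun a => i < a)).card := Finset.card_image_le
    have h2 : (A.filter (fun a => i < a)) ⊆ A.erase i := by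
      intro a ha
      rw [Finset.mem_filter] at ha
      exact Finset.mem_erase.mpr ⟨by omega, ha.1⟩
    have h3 := Finset.card_le_card h2
    have h4 : (A.erase i).card = N - 1 := by rw [Finset.card_erase_of_mem hi]
    omega
  have hSmcard : Sm.card + 1 ≤ N := by
    have h1 : Sm.card ≤ (A.filter (fun a => a < i)).card := Finset.card_image_le
    have h2 : (A.filter (fun a => a < i)) ⊆ A.erase i := by
      intro a ha
      rw [Finset.mem_filter] at ha
      exact Finset.mem_erase.mpr ⟨by omega, ha.1⟩
    have h3 := Finset.card_le_card h2
    have h4 : (A.erase i).card = N - 1 := by rw [Finset.card_erase_of_mem hi]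
    omega
  have hmemp : ∀ d : ℕ, (i + 1 + (d : ℤ) ∈ A ↔ d ∈ Sp) := by
    intro d
    constructor
    · intro hmem
      rw [hSp, Finset.mem_image]
      exact ⟨i + 1 + d, Finset.mem_filter.mpr ⟨hmem, by omega⟩, by omega⟩
    · intro hd
      rw [hSp, Finset.mem_image] at hd
      obtain ⟨a, ha, hae⟩ := hd
      rw [Finset.mem_filter] at ha
      have heq2 : i + 1 + (d : ℤ) = a := by omega
      rw [heq2]; exact ha.1
  have hmemm : ∀ d : ℕ, (i - 1 - (d : ℤ) ∈ A ↔ d ∈ Sm) := by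
    intro d
    constructor
    · intro hmem
      rw [hSm, Finset.mem_image]
      exact ⟨i - 1 - d, Finset.mem_filter.mpr ⟨hmem, by omega⟩, by omega⟩
    · intro hd
      rw [hSm, Finset.mem_image] at hd
      obtain ⟨a, ha, hae⟩ := hd
      rw [Finset.mem_filter] at ha
      have heq2 : i - 1 - (d : ℤ) = a := by omega
      rw [heq2]; exact ha.1
  have habsp : ∀ d : ℕ, |(i : ℝ) - ((i + 1 + (d : ℤ) : ℤ) : ℝ)| = (d : ℝ) + 1 := by
    intro d
    push_cast
    rw [show (i:ℝ) - ((i:ℝ) + 1 + (d:ℝ)) = -((d:ℝ) + 1) by ring, abs_neg]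
    exact abs_of_nonneg (by positivity)
  have habsm : ∀ d : ℕ, |(i : ℝ) - ((i - 1 - (d : ℤ) : ℤ) : ℝ)| = (d : ℝ) + 1 := by
    intro d
    push_cast
    rw [show (i:ℝ) - ((i:ℝ) - 1 - (d:ℝ)) = (d:ℝ) + 1 by ring]
    exact abs_of_nonneg (by positivity)
  have hp2 := main_half Sp (fun d : ℕ => i + 1 + d) hmemp habsp hSpcard
  have hm2 := main_half Sm (fun d : ℕ => i - 1 - d) hmemm habsm hSmcard
  -- inject both halves into the total sum
  have hsplit : (∑' d : ℕ, F (i + 1 + (d : ℤ))) + (∑' d : ℕ, F (i - 1 - (d : ℤ)))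
      ≤ ∑' j : ℤ, F j := by
    rw [← Summable.tsum_add_tsum_compl (s := Set.Ioi i) ENNReal.summable ENNReal.summable]
    have hle1 : (∑' d : ℕ, F (i + 1 + (d : ℤ))) ≤ ∑' x : (Set.Ioi i), F x := by
      have hinj : Function.Injective (fun d : ℕ => (⟨i + 1 + d, by simp; omega⟩ : Set.Ioi i)) := by
        intro a b hab
        have : i + 1 + (a : ℤ) = i + 1 + (b : ℤ) := congrArg Subtype.val hab
        omega
      exact ENNReal.tsum_comp_le_tsum_of_injective hinj (fun x => F x)
    have hle2 : (∑' d : ℕ, F (i - 1 - (d : ℤ))) ≤ ∑' x : ↥(Set.Ioi i)ᶜ, F x := by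
      have hinj : Function.Injective
          (fun d : ℕ => (⟨i - 1 - d, by simp; omega⟩ : ↥(Set.Ioi i)ᶜ)) := by
        intro a b hab
        have : i - 1 - (a : ℤ) = i - 1 - (b : ℤ) := congrArg Subtype.val hab
        omega
      exact ENNReal.tsum_comp_le_tsum_of_injective hinj (fun x => F x)
    exact add_le_add hle1 hle2
  -- final constant comparison
  have hconst : ENNReal.ofReal ((2 / s) * (2 / 3 : ℝ) ^ s * ((N : ℝ) * h) ^ (-s))
      ≤ ENNReal.ofReal (s⁻¹ * (h * (N : ℝ)) ^ (-s)) +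
        ENNReal.ofReal (s⁻¹ * (h * (N : ℝ)) ^ (-s)) := by
    have hX : (0:ℝ) ≤ (h * (N : ℝ)) ^ (-s) := by
      have : (0:ℝ) < h * (N : ℝ) := by
        have : (1:ℝ) ≤ (N : ℝ) := by exact_mod_cast hN
        nlinarith
      positivity
    rw [← ENNReal.ofReal_add (by positivity) (by positivity)]
    apply ENNReal.ofReal_le_ofReal
    have h23 : ((2:ℝ) / 3) ^ s ≤ 1 :=
      Real.rpow_le_one (by norm_num) (by norm_num) hs.le
    have hcomm : ((N : ℝ) * h) ^ (-s) = (h * (N : ℝ)) ^ (-s) := by rw [mul_comm]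
    rw [hcomm]
    have h2s : (0:ℝ) ≤ 2 / s := by positivity
    have h23nn : (0:ℝ) ≤ ((2:ℝ)/3) ^ s := Real.rpow_nonneg (by norm_num) _
    have hchain : (2 / s) * ((2:ℝ) / 3) ^ s * (h * (N : ℝ)) ^ (-s)
        ≤ (2 / s) * (h * (N : ℝ)) ^ (-s) := by
      nlinarith [mul_nonneg (mul_nonneg h2s hX) (by linarith : (0:ℝ) ≤ 1 - ((2:ℝ)/3) ^ s)]
    have heq : s⁻¹ * (h * (N : ℝ)) ^ (-s) + s⁻¹ * (h * (N : ℝ)) ^ (-s)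
        = (2 / s) * (h * (N : ℝ)) ^ (-s) := by
      field_simp
      ring
    linarith
  calc ENNReal.ofReal ((2 / s) * (2 / 3 : ℝ) ^ s * ((N : ℝ) * h) ^ (-s))
      ≤ ENNReal.ofReal (s⁻¹ * (h * (N : ℝ)) ^ (-s)) +
        ENNReal.ofReal (s⁻¹ * (h * (N : ℝ)) ^ (-s)) := hconst
    _ ≤ (∑' d : ℕ, F (i + 1 + (d : ℤ))) + (∑' d : ℕ, F (i - 1 - (d : ℤ))) :=
        add_le_add hp2 hm2
    _ ≤ ∑' j : ℤ, F j := hsplit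
end

section
/- Let s ∈ (0,1) and T > 1. Let (a_k)_{k∈ℤ} be a bounded, nonnegative, nonincreasing sequence for which there exists N ∈ ℤ with a_k = 0 for all k ≥ N. Then ∑_{k∈ℤ} a_k^{1−s} T^k ≤ C ∑_{k∈ℤ, a_k ≠ 0} a_{k+1} a_k^{−s} T^k, with the constant C = T^{1/(1−s)}, which depends only on s and T and not on N or the sequence. -/
/-!
Shifting the index, `L = ∑ a_k^{1-s} T^k` equals `T ∑ a_{k+1}^{1-s} T^k`, and each term factors as
`(a_{k+1} a_k^{-s} T^k)^{1-s} (a_k^{1-s} T^k)^s` (monotonicity makes both sides vanish when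
`a_k = 0`). Hölder's inequality with exponents `1/(1-s)` and `1/s` gives `L ≤ T R^{1-s} L^s`,
and since `L` is finite (geometric decay of `T^k` as `k → -∞`) it can be absorbed:
`L ≤ T^{1/(1-s)} R`.
-/

open scoped ENNReal

open MeasureTheory in
theorem ENNReal.tsum_rpow_mul_rpow_le {ι : Type*} (f g : ι → ℝ≥0∞) {p q : ℝ} (hp : 0 ≤ p)
    (hq : 0 ≤ q) (hpq : p + q = 1) :
    ∑' i, f i ^ p * g i ^ q ≤ (∑' i, f i) ^ p * (∑' i, g i) ^ q := by
  let : MeasurableSpace ι := ⊤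
  simpa only [lintegral_count] using
    ENNReal.lintegral_mul_norm_pow_le (μ := (Measure.count : Measure ι))
      Measurable.of_discrete.aemeasurable Measurable.of_discrete.aemeasurable hp hq hpq

theorem ENNReal.le_rpow_mul_of_le_mul_rpow_mul_rpow {L c R : ℝ≥0∞} {s : ℝ} (hs : s < 1)
    (hL : L ≠ ⊤) (h : L ≤ c * (R ^ (1 - s) * L ^ s)) : L ≤ c ^ (1 / (1 - s)) * R := by
  rcases eq_or_ne L 0 with rfl | hL0
  · exact zero_le
  have hs' : 0 < 1 - s := sub_pos.mpr hs
  have hcancel : L ^ (1 - s) ≤ c * R ^ (1 - s) := by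
    rw [← ENNReal.mul_le_mul_iff_left (ENNReal.rpow_pos (pos_iff_ne_zero.mpr hL0) hL).ne'
      (ENNReal.rpow_ne_top_of_ne_zero hL0 hL), ← ENNReal.rpow_add _ _ hL0 hL, sub_add_cancel,
      ENNReal.rpow_one, mul_assoc]
    exact h
  calc L = (L ^ (1 - s)) ^ (1 / (1 - s)) := by
        rw [← ENNReal.rpow_mul, mul_one_div_cancel hs'.ne', ENNReal.rpow_one]
    _ ≤ (c * R ^ (1 - s)) ^ (1 / (1 - s)) := by gcongr
    _ = c ^ (1 / (1 - s)) * R := by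
        rw [ENNReal.mul_rpow_of_nonneg _ _ (by positivity), ← ENNReal.rpow_mul,
          mul_one_div_cancel hs'.ne', ENNReal.rpow_one]

theorem tsum_ofReal_mul_zpow_eq_ofReal_mul_tsum_succ {T : ℝ} (hT : 0 < T) (b : ℤ → ℝ) :
    ∑' k : ℤ, ENNReal.ofReal (b k * T ^ k) =
      ENNReal.ofReal T * ∑' k : ℤ, ENNReal.ofReal (b (k + 1) * T ^ k) := by
  rw [← ENNReal.tsum_mul_left, ← (Equiv.addRight (1 : ℤ)).tsum_eq]
  refine tsum_congr fun k => ?_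
  rw [Equiv.coe_addRight, ← ENNReal.ofReal_mul hT.le, zpow_add_one₀ hT.ne']
  ring_nf

theorem tsum_ofReal_mul_zpow_ne_top {T B : ℝ} (hT : 1 < T) {b : ℤ → ℝ} (hB : ∀ k, b k ≤ B)
    {N : ℤ} (hN : ∀ k, N ≤ k → b k = 0) :
    ∑' k : ℤ, ENNReal.ofReal (b k * T ^ k) ≠ ⊤ := by
  have hT0 : 0 < T := one_pos.trans hT
  have hinj : Function.Injective fun n : ℕ => N - 1 - (n : ℤ) := fun m n h => by simpa using h
  have hsupp : Function.support (fun k : ℤ => ENNReal.ofReal (b k * T ^ k)) ⊆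
      Set.range fun n : ℕ => N - 1 - (n : ℤ) := by
    intro k hk
    rcases lt_or_ge k N with hkN | hkN
    · exact ⟨(N - 1 - k).toNat, by simp only; omega⟩
    · simp [hN k hkN] at hk
  have hbound (n : ℕ) : ENNReal.ofReal (b (N - 1 - n) * T ^ (N - 1 - (n : ℤ))) ≤
      ENNReal.ofReal (max B 0 * T ^ (N - 1)) * ENNReal.ofReal T⁻¹ ^ n := by
    rw [← ENNReal.ofReal_pow (by positivity), ← ENNReal.ofReal_mul (by positivity),
      zpow_sub₀ hT0.ne', zpow_natCast, div_eq_mul_inv, ← inv_pow, ← mul_assoc]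
    gcongr
    exact (hB _).trans (le_max_left _ _)
  rw [← hinj.tsum_eq hsupp]
  refine ne_top_of_le_ne_top ?_ (ENNReal.tsum_le_tsum hbound)
  rw [ENNReal.tsum_mul_left, ENNReal.tsum_geometric, ← ENNReal.ofReal_one,
    ← ENNReal.ofReal_sub _ (by positivity)]
  refine ENNReal.mul_ne_top ENNReal.ofReal_ne_top (ENNReal.inv_ne_top.mpr ?_)
  simpa using inv_lt_one_of_one_lt₀ hT

theorem Real.rpow_one_sub_mul_eq_rpow_mul_rpow {x y c : ℝ} (hx : 0 ≤ x) (hy : 0 < y) (hc : 0 ≤ c)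
    (s : ℝ) : x ^ (1 - s) * c = (x * y ^ (-s) * c) ^ (1 - s) * (y ^ (1 - s) * c) ^ s := by
  rw [Real.mul_rpow (by positivity) hc, Real.mul_rpow hx (by positivity),
    Real.mul_rpow (by positivity) hc, ← Real.rpow_mul hy.le, ← Real.rpow_mul hy.le]
  calc x ^ (1 - s) * c = x ^ (1 - s) * y ^ (-s * (1 - s) + (1 - s) * s) * c ^ (1 - s + s) := by
        rw [show -s * (1 - s) + (1 - s) * s = 0 by ring, sub_add_cancel, Real.rpow_zero,
          Real.rpow_one, mul_one]
    _ = _ := by rw [Real.rpow_add hy, Real.rpow_add' hc (by norm_num)]; ring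

theorem ENNReal.ofReal_rpow_one_sub_mul_eq {x y c s : ℝ} (hx : 0 ≤ x) (hy : 0 ≤ y) (hc : 0 ≤ c)
    (hs0 : 0 < s) (hs1 : s < 1) (hxy : y = 0 → x = 0) :
    ENNReal.ofReal (x ^ (1 - s) * c) =
      (if y = 0 then 0 else ENNReal.ofReal (x * y ^ (-s) * c)) ^ (1 - s) *
        ENNReal.ofReal (y ^ (1 - s) * c) ^ s := by
  split_ifs with h
  · simp [hxy h, Real.zero_rpow (sub_pos.mpr hs1).ne', ENNReal.zero_rpow_of_pos (sub_pos.mpr hs1)]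
  rw [ENNReal.ofReal_rpow_of_nonneg (by positivity) (sub_pos.mpr hs1).le,
    ENNReal.ofReal_rpow_of_nonneg (by positivity) hs0.le, ← ENNReal.ofReal_mul (by positivity),
    Real.rpow_one_sub_mul_eq_rpow_mul_rpow hx (lt_of_le_of_ne hy (Ne.symm h)) hc]

theorem stmt6 (s T : ℝ) (hs0 : 0 < s) (hs1 : s < 1) (hT : 1 < T)
    (a : ℤ → ℝ) (ha0 : ∀ k : ℤ, 0 ≤ a k) (hbdd : ∃ B : ℝ, ∀ k : ℤ, a k ≤ B)
    (hmono : ∀ k l : ℤ, k ≤ l → a l ≤ a k)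
    (hN : ∃ N : ℤ, ∀ k : ℤ, N ≤ k → a k = 0) :
    ∑' k : ℤ, ENNReal.ofReal (a k ^ (1 - s) * T ^ k) ≤
      ENNReal.ofReal (T ^ (1 / (1 - s))) *
        ∑' k : ℤ, (if a k = 0 then 0 else ENNReal.ofReal (a (k + 1) * a k ^ (-s) * T ^ k)) := by
  obtain ⟨B, hB⟩ := hbdd
  obtain ⟨N, hN⟩ := hN
  have hT0 : 0 < T := one_pos.trans hT
  have hs : 0 < 1 - s := sub_pos.mpr hs1
  set L := ∑' k : ℤ, ENNReal.ofReal (a k ^ (1 - s) * T ^ k)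
  set R := ∑' k : ℤ, (if a k = 0 then 0 else ENNReal.ofReal (a (k + 1) * a k ^ (-s) * T ^ k))
  have hL : L ≠ ⊤ := tsum_ofReal_mul_zpow_ne_top hT
    (fun k => Real.rpow_le_rpow (ha0 k) (hB k) hs.le) fun k hk => by
      rw [hN k hk, Real.zero_rpow hs.ne']
  have hterm (k : ℤ) : ENNReal.ofReal (a (k + 1) ^ (1 - s) * T ^ k) =
      (if a k = 0 then 0 else ENNReal.ofReal (a (k + 1) * a k ^ (-s) * T ^ k)) ^ (1 - s) *
        ENNReal.ofReal (a k ^ (1 - s) * T ^ k) ^ s :=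
    ENNReal.ofReal_rpow_one_sub_mul_eq (ha0 _) (ha0 _) (zpow_pos hT0 k).le hs0 hs1 fun h =>
      le_antisymm (h ▸ hmono k (k + 1) (by omega)) (ha0 _)
  have hHolder : L ≤ ENNReal.ofReal T * (R ^ (1 - s) * L ^ s) := calc
    L = ENNReal.ofReal T * ∑' k : ℤ, ENNReal.ofReal (a (k + 1) ^ (1 - s) * T ^ k) :=
      tsum_ofReal_mul_zpow_eq_ofReal_mul_tsum_succ hT0 fun k => a k ^ (1 - s)
    _ ≤ ENNReal.ofReal T * (R ^ (1 - s) * L ^ s) := by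
      rw [tsum_congr hterm]
      gcongr
      exact ENNReal.tsum_rpow_mul_rpow_le _ _ hs.le hs0.le (sub_add_cancel 1 s)
  rw [← ENNReal.ofReal_rpow_of_pos hT0]
  exact ENNReal.le_rpow_mul_of_le_mul_rpow_mul_rpow hs1 hL hHolder
end

section
/- Let q > 1 and q' := q/(q−1). For all real numbers x and y, (4/(q q')) (x^{q/2} − y^{q/2})² ≤ (x^{q−1} − y^{q−1})(x − y), where for r > 0 the power of a real number is taken in the odd sense x^r := |x|^{r−1} x. -/
noncomputable def opow (x r : ℝ) : ℝ := |x| ^ (r - 1) * x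

open Real intervalIntegral MeasureTheory

lemma opow_neg' (x r : ℝ) : opow (-x) r = - opow x r := by
  simp [opow, abs_neg, mul_neg]

lemma opow_of_nonneg {x : ℝ} (r : ℝ) (hx : 0 ≤ x) (hr : r ≠ 0) : opow x r = x ^ r := by
  rcases eq_or_lt_of_le hx with h | h
  · simp [opow, ← h, Real.zero_rpow hr]
  · rw [opow, abs_of_pos h, ← Real.rpow_add_one (ne_of_gt h)]
    ring_nf

lemma opow_of_nonpos {x : ℝ} (r : ℝ) (hx : x ≤ 0) (hr : r ≠ 0) : opow x r = -((-x) ^ r) := by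
  have h1 : opow (-(-x)) r = - opow (-x) r := opow_neg' (-x) r
  rw [neg_neg] at h1
  rw [h1, opow_of_nonneg r (by linarith) hr]

lemma core (q : ℝ) (hq : 1 < q) (a b : ℝ) (hb : 0 ≤ b) (hba : b ≤ a) :
    (4 * (q - 1) / q ^ 2) * (a ^ (q/2) - b ^ (q/2)) ^ 2 ≤ (a ^ (q-1) - b ^ (q-1)) * (a - b) := by
  have hq1' : q - 1 ≠ 0 := by intro h; linarith
  rcases eq_or_lt_of_le hba with rfl | hlt
  · simp
  have ha : (0:ℝ) ≤ a := hb.trans hba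
  have hr1 : (-1:ℝ) < q/2 - 1 := by linarith
  have hr2 : (-1:ℝ) < q - 2 := by linarith
  set I : ℝ := ∫ t in b..a, t ^ (q/2 - 1) with hIdef
  set J : ℝ := ∫ t in b..a, t ^ (q - 2) with hJdef
  have hI : I = (a ^ (q/2) - b ^ (q/2)) / (q/2) := by
    rw [hIdef, integral_rpow (Or.inl hr1)]
    norm_num
  have hJ : J = (a ^ (q-1) - b ^ (q-1)) / (q-1) := by
    rw [hJdef, integral_rpow (Or.inl hr2), show q-2+1 = q-1 by ring]
  have int1 : IntervalIntegrable (fun t : ℝ => t ^ (q/2 - 1)) volume b a :=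
    intervalIntegrable_rpow' hr1
  have int2 : IntervalIntegrable (fun t : ℝ => t ^ (q - 2)) volume b a :=
    intervalIntegrable_rpow' hr2
  -- Cauchy-Schwarz
  have key : 0 ≤ (a - b)^2 * J - 2*(a-b)*I*I + I^2 * (a - b) := by
    have h0 : (0:ℝ) ≤ ∫ t in b..a, ((a-b) * t ^ (q/2-1) - I)^2 :=
      intervalIntegral.integral_nonneg hba (fun t _ => sq_nonneg _)
    have hcong : (∫ t in b..a, ((a-b) * t ^ (q/2-1) - I)^2)
        = ∫ t in b..a, ((a-b)^2 * t ^ (q-2) - 2*(a-b)*I * t ^ (q/2-1) + I^2) := by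
      apply intervalIntegral.integral_congr
      intro t ht
      have ht0 : 0 ≤ t := by
        rcases Set.mem_uIcc.mp ht with ⟨h1, _⟩ | ⟨h1, _⟩
        · exact hb.trans h1
        · exact ha.trans h1
      have hsq : (t ^ (q/2-1))^2 = t ^ (q-2) := by
        rw [← Real.rpow_natCast (t ^ (q/2-1)) 2, ← Real.rpow_mul ht0]
        congr 1
        push_cast
        ring
      show ((a-b) * t ^ (q/2-1) - I)^2 = (a-b)^2 * t ^ (q-2) - 2*(a-b)*I * t ^ (q/2-1) + I^2
      rw [← hsq]
      ring
    have hlin : (∫ t in b..a, ((a-b)^2 * t ^ (q-2) - 2*(a-b)*I * t ^ (q/2-1) + I^2))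
        = (a-b)^2 * J - 2*(a-b)*I*I + I^2 * (a - b) := by
      rw [intervalIntegral.integral_add ((int2.const_mul _).sub (int1.const_mul _))
            intervalIntegrable_const,
          intervalIntegral.integral_sub (int2.const_mul _) (int1.const_mul _),
          intervalIntegral.integral_const_mul, intervalIntegral.integral_const_mul,
          intervalIntegral.integral_const]
      rw [← hIdef, ← hJdef]
      simp only [smul_eq_mul]
      ring
    rw [hcong, hlin] at h0
    exact h0
  have cs : I^2 ≤ (a - b) * J := by nlinarith [key, sq_nonneg (a-b)]
  have h1 : a ^ (q/2) - b ^ (q/2) = (q/2) * I := by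
    rw [hI]; field_simp
  have h2 : a ^ (q-1) - b ^ (q-1) = (q-1) * J := by
    rw [hJ]; field_simp
  rw [h1, h2]
  have hq0 : q ≠ 0 := by linarith
  have : (4 * (q - 1) / q ^ 2) * ((q/2) * I)^2 = (q-1) * I^2 := by
    field_simp; ring
  rw [this]
  nlinarith [cs, sub_nonneg.mpr (le_of_lt hq)]

lemma sq_half (q : ℝ) (hq : 1 < q) (a : ℝ) (ha : 0 ≤ a) :
    (a ^ (q/2)) ^ 2 = a ^ (q-1) * a := by
  rcases eq_or_lt_of_le ha with rfl | ha'
  · rw [Real.zero_rpow (div_ne_zero (by linarith : q ≠ 0) two_ne_zero),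
        Real.zero_rpow (by intro h; linarith : q-1 ≠ 0)]
    ring
  · rw [sq, ← Real.rpow_add ha', ← Real.rpow_add_one (ne_of_gt ha')]
    ring_nf

lemma mixed (q : ℝ) (hq : 1 < q) (a b : ℝ) (ha : 0 ≤ a) (hb : 0 ≤ b) :
    (4 * (q - 1) / q ^ 2) * (a ^ (q/2) + b ^ (q/2)) ^ 2 ≤ (a ^ (q-1) + b ^ (q-1)) * (a + b) := by
  have hq0 : (0:ℝ) < q ^ 2 := by positivity
  have hc1 : 4 * (q - 1) / q ^ 2 ≤ 1 := by
    rw [div_le_one hq0]; nlinarith [sq_nonneg (q - 2)]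
  have hc0 : 0 ≤ 4 * (q - 1) / q ^ 2 := div_nonneg (by linarith) (le_of_lt hq0)
  have amgm : 2 * (a ^ (q/2) * b ^ (q/2)) ≤ a ^ (q-1) * b + a * b ^ (q-1) := by
    have hq1' : q - 1 ≠ 0 := by intro h; linarith
    rcases eq_or_lt_of_le ha with rfl | ha'
    · rw [Real.zero_rpow (div_ne_zero (by linarith : q ≠ 0) two_ne_zero), Real.zero_rpow hq1']
      simp
    rcases eq_or_lt_of_le hb with rfl | hb'
    · rw [Real.zero_rpow (div_ne_zero (by linarith : q ≠ 0) two_ne_zero), Real.zero_rpow hq1']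
      simp
    have h := sq_nonneg (a ^ ((q-1)/2) * b ^ (1/2:ℝ) - a ^ (1/2:ℝ) * b ^ ((q-1)/2))
    have f1 : a ^ ((q-1)/2) * a ^ ((q-1)/2) = a ^ (q-1) := by
      rw [← Real.rpow_add ha']; ring_nf
    have f2 : b ^ ((q-1)/2) * b ^ ((q-1)/2) = b ^ (q-1) := by
      rw [← Real.rpow_add hb']; ring_nf
    have f3 : a ^ (1/2:ℝ) * a ^ (1/2:ℝ) = a := by
      rw [← Real.rpow_add ha']; norm_num
    have f4 : b ^ (1/2:ℝ) * b ^ (1/2:ℝ) = b := by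
      rw [← Real.rpow_add hb']; norm_num
    have f5 : a ^ ((q-1)/2) * a ^ (1/2:ℝ) = a ^ (q/2) := by
      rw [← Real.rpow_add ha']; ring_nf
    have f6 : b ^ ((q-1)/2) * b ^ (1/2:ℝ) = b ^ (q/2) := by
      rw [← Real.rpow_add hb']; ring_nf
    have g : (a ^ ((q-1)/2) * b ^ (1/2:ℝ) - a ^ (1/2:ℝ) * b ^ ((q-1)/2))^2
        = a ^ (q-1) * b + a * b ^ (q-1) - 2*(a ^ (q/2) * b ^ (q/2)) := by
      linear_combination (b^(1/2:ℝ))^2 * f1 + a^(q-1) * f4 + (b^((q-1)/2))^2 * f3 + a * f2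
        - 2*(b^((q-1)/2)*b^(1/2:ℝ)) * f5 - 2*(a^(q/2)) * f6
    linarith [h, g.symm.le]
  have e1 := sq_half q hq a ha
  have e2 := sq_half q hq b hb
  have main : (a ^ (q/2) + b ^ (q/2)) ^ 2 ≤ (a ^ (q-1) + b ^ (q-1)) * (a + b) := by
    nlinarith [e1, e2, amgm]
  have hsq : 0 ≤ (a ^ (q/2) + b ^ (q/2)) ^ 2 := sq_nonneg _
  calc (4 * (q - 1) / q ^ 2) * (a ^ (q/2) + b ^ (q/2)) ^ 2
      ≤ 1 * (a ^ (q/2) + b ^ (q/2)) ^ 2 := by nlinarith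
    _ ≤ (a ^ (q-1) + b ^ (q-1)) * (a + b) := by linarith

theorem stmt7 (q : ℝ) (hq : 1 < q) (x y : ℝ) :
    (4 / (q * (q / (q - 1)))) * (opow x (q / 2) - opow y (q / 2)) ^ 2 ≤
      (opow x (q - 1) - opow y (q - 1)) * (x - y) := by
  have hq0 : q ≠ 0 := by linarith
  have hq1 : q - 1 ≠ 0 := by intro h; linarith
  have hc : 4 / (q * (q / (q - 1))) = 4 * (q - 1) / q ^ 2 := by
    field_simp
  rw [hc]
  have h2 : (q:ℝ)/2 ≠ 0 := by positivity
  rcases le_total 0 x with hx | hx <;> rcases le_total 0 y with hy | hy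
  · -- both nonneg
    rw [opow_of_nonneg _ hx h2, opow_of_nonneg _ hy h2,
        opow_of_nonneg _ hx hq1, opow_of_nonneg _ hy hq1]
    rcases le_total y x with hxy | hxy
    · exact core q hq x y hy hxy
    · have h := core q hq y x hx hxy
      linear_combination h
  · -- x ≥ 0 ≥ y
    have hy' : 0 ≤ -y := by linarith
    rw [opow_of_nonpos _ hy h2, opow_of_nonpos _ hy hq1,
        opow_of_nonneg _ hx h2, opow_of_nonneg _ hx hq1]
    have h := mixed q hq x (-y) hx hy'
    linear_combination h
  · -- x ≤ 0 ≤ y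
    have hx' : 0 ≤ -x := by linarith
    rw [opow_of_nonpos _ hx h2, opow_of_nonpos _ hx hq1,
        opow_of_nonneg _ hy h2, opow_of_nonneg _ hy hq1]
    have h := mixed q hq y (-x) hy hx'
    linear_combination h
  · -- both nonpos
    have hx' : 0 ≤ -x := by linarith
    have hy' : 0 ≤ -y := by linarith
    rw [opow_of_nonpos _ hx h2, opow_of_nonpos _ hx hq1,
        opow_of_nonpos _ hy h2, opow_of_nonpos _ hy hq1]
    rcases le_total (-y) (-x) with hxy | hxy
    · have h := core q hq (-x) (-y) hy' hxy
      linear_combination h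
    · have h := core q hq (-y) (-x) hx' hxy
      linear_combination h
end

section
/- Let q > 1, Δt > 0, a mesh size h > 0, an integer M_x ≥ 1, nonnegative symmetric summable weights (w_j)_{j≠0}, initial data u⁰ supported in {|i| ≤ M_x}, and let (uⁿ)_{n∈ℕ} be the solution of the fully discrete implicit scheme (FD). Then for every n ∈ ℕ the two-sided energy inequality holds: −‖uⁿ‖_X² ≤ (1/q') (‖u^{n+1}‖_{ℓ^q_h}^q − ‖uⁿ‖_{ℓ^q_h}^q)/Δt ≤ −‖u^{n+1}‖_X². -/
open scoped BigOperators ENNReal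

noncomputable def discLap (w u : ℤ → ℝ) (i : ℤ) : ℝ :=
  ∑' j : ℤ, if j = 0 then 0 else w j * (u i - u (i - j))

noncomputable def lqNorm (h q : ℝ) (u : ℤ → ℝ) : ℝ :=
  (∑' i : ℤ, h * |u i| ^ q) ^ (1 / q)

noncomputable def energyNorm (h : ℝ) (w u : ℤ → ℝ) : ℝ :=
  Real.sqrt ((1 / 2) * ∑' i : ℤ, ∑' j : ℤ, if j = 0 then 0 else h * w j * (u i - u (i - j)) ^ 2)

/-- The fully discrete implicit scheme (FD). -/
def IsFD (q Δt : ℝ) (w : ℤ → ℝ) (Mx : ℤ) (u0 : ℤ → ℝ) (u : ℕ → ℤ → ℝ) : Prop :=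
  u 0 = u0 ∧
  (∀ n : ℕ, ∀ i : ℤ, Mx < |i| → u n i = 0) ∧
  (∀ n : ℕ, ∀ i : ℤ, |i| ≤ Mx →
    (opow (u (n + 1) i) (q - 1) - opow (u n i) (q - 1)) / Δt + discLap w (u (n + 1)) i = 0)

/-- A solution of the semi-discrete scheme (SD) with initial data `u0`. -/
def IsSD (q : ℝ) (w : ℤ → ℝ) (Mx : ℤ) (u0 : ℤ → ℝ) (v : ℤ → ℝ → ℝ) : Prop :=
  (∀ i : ℤ, ContinuousOn (v i) (Set.Ici 0)) ∧
  (∀ i : ℤ, Mx < |i| → ∀ t : ℝ, 0 ≤ t → v i t = 0) ∧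
  (∀ i : ℤ, v i 0 = u0 i) ∧
  (∀ i : ℤ, |i| ≤ Mx → ∀ t : ℝ, 0 ≤ t →
    opow (v i t) (q - 1) = opow (u0 i) (q - 1) - ∫ s in (0:ℝ)..t, discLap w (fun k => v k s) i)

/-- `C` satisfies the discrete Poincaré–Sobolev inequality for exponent `q`. -/
def PSConst (h q C : ℝ) (w : ℤ → ℝ) (Mx : ℤ) : Prop :=
  ∀ f : ℤ → ℝ, (∀ i : ℤ, Mx < |i| → f i = 0) → lqNorm h q f ≤ C * energyNorm h w f

/-!
Write `φ(x) = x^(q-1)` and let `E` be the symmetric bilinear form with `E(u, u) = ‖u‖_X²`.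
Testing the scheme with a compactly supported `c` and summing by parts (the bond reflection
`(i, j) ↦ (i - j, -j)` together with `w₋ⱼ = wⱼ`) gives
`∑ h cᵢ (φ(uᵢⁿ⁺¹) - φ(uᵢⁿ)) = -Δt E(c, uⁿ⁺¹)`.
By Young's inequality `(|y|^q - |x|^q)/q'` lies between `x (φ y - φ x)` and `y (φ y - φ x)`,
so the `ℓ^q` increment is squeezed between `-Δt E(uⁿ, uⁿ⁺¹)` and `-Δt E(uⁿ⁺¹, uⁿ⁺¹)`.
In particular `E(uⁿ⁺¹, uⁿ⁺¹) ≤ E(uⁿ, uⁿ⁺¹)`, and with `2 E(uⁿ, uⁿ⁺¹) ≤ E(uⁿ, uⁿ) + E(uⁿ⁺¹, uⁿ⁺¹)`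
this gives `E(uⁿ, uⁿ⁺¹) ≤ E(uⁿ, uⁿ)`.
-/

open Function

lemma abs_opow {r : ℝ} (hr : r ≠ 0) (x : ℝ) : |opow x r| = |x| ^ r := by
  rcases eq_or_ne x 0 with rfl | hx
  · simp [opow, Real.zero_rpow hr]
  · have hx' : |x| ≠ 0 := abs_ne_zero.mpr hx
    rw [opow, abs_mul, abs_of_nonneg (by positivity), Real.rpow_sub_one hx',
      div_mul_cancel₀ _ hx']

lemma mul_opow_sub_one_self {p : ℝ} (hp : p ≠ 0) (x : ℝ) : x * opow x (p - 1) = |x| ^ p := by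
  rcases eq_or_ne x 0 with rfl | hx
  · simp [Real.zero_rpow hp]
  · have hx' : |x| ≠ 0 := abs_ne_zero.mpr hx
    rw [opow, Real.rpow_sub_one hx', Real.rpow_sub_one hx', mul_left_comm, ← abs_mul_abs_self x]
    field_simp

lemma Real.HolderConjugate.div_add_div_conj {p p' : ℝ} (hpp : p.HolderConjugate p') (a : ℝ) :
    a / p + a / p' = a := by
  rw [div_eq_mul_inv, div_eq_mul_inv, ← mul_add, hpp.inv_add_inv_eq_one, mul_one]

/-- Young's inequality `a b ≤ a^p/p + b^p'/p'` with `b = |y|^(p-1)`, so that `b^p' = |y|^p`. -/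
lemma mul_opow_le {p p' : ℝ} (hpp : p.HolderConjugate p') (x y : ℝ) :
    x * opow y (p - 1) ≤ |x| ^ p / p + |y| ^ p / p' := by
  calc x * opow y (p - 1) ≤ |x| * |y| ^ (p - 1) := by
        rw [← abs_opow hpp.sub_one_ne_zero, ← abs_mul]; exact le_abs_self _
    _ ≤ |x| ^ p / p + (|y| ^ (p - 1)) ^ p' / p' :=
        Real.young_inequality_of_nonneg (abs_nonneg x) (by positivity) hpp
    _ = |x| ^ p / p + |y| ^ p / p' := by
        rw [← Real.rpow_mul (abs_nonneg y), hpp.sub_one_mul_conj]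

lemma div_conj_sub_le_mul_opow_sub {p p' : ℝ} (hpp : p.HolderConjugate p') (x y : ℝ) :
    (|y| ^ p - |x| ^ p) / p' ≤ y * (opow y (p - 1) - opow x (p - 1)) := by
  have hyoung := mul_opow_le hpp y x
  have hself := mul_opow_sub_one_self hpp.ne_zero y
  have hsplit := hpp.div_add_div_conj (|y| ^ p)
  rw [sub_div, mul_sub, hself]
  linarith

lemma mul_opow_sub_le_div_conj_sub {p p' : ℝ} (hpp : p.HolderConjugate p') (x y : ℝ) :
    x * (opow y (p - 1) - opow x (p - 1)) ≤ (|y| ^ p - |x| ^ p) / p' := by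
  have hyoung := mul_opow_le hpp x y
  have hself := mul_opow_sub_one_self hpp.ne_zero x
  have hsplit := hpp.div_add_div_conj (|x| ^ p)
  rw [sub_div, mul_sub, hself]
  linarith

lemma discLap_eq_tsum (w u : ℤ → ℝ) (i : ℤ) :
    discLap w u i = ∑' j : ℤ, w j * (u i - u (i - j)) :=
  tsum_congr fun j => by split_ifs with hj <;> simp [hj]

noncomputable def energyDensity (h : ℝ) (w f g : ℤ → ℝ) (p : ℤ × ℤ) : ℝ :=
  h * w p.2 * (f p.1 - f (p.1 - p.2)) * (g p.1 - g (p.1 - p.2))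

noncomputable def energyForm (h : ℝ) (w f g : ℤ → ℝ) : ℝ :=
  1 / 2 * ∑' p : ℤ × ℤ, energyDensity h w f g p

noncomputable def pairingDensity (h : ℝ) (w f g : ℤ → ℝ) (p : ℤ × ℤ) : ℝ :=
  h * f p.1 * (w p.2 * (g p.1 - g (p.1 - p.2)))

/-- Exchanges the two endpoints `i` and `i - j` of a bond. -/
def bondFlip : Equiv.Perm (ℤ × ℤ) :=
  Involutive.toPerm (fun p => (p.1 - p.2, -p.2)) fun p => by simp

@[simp]
lemma bondFlip_apply (p : ℤ × ℤ) : bondFlip p = (p.1 - p.2, -p.2) := rfl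

section FiniteSupport

variable {h : ℝ} {w f g : ℤ → ℝ}

lemma summable_pairingDensity (hw : Summable w) (hf : f.HasFiniteSupport)
    (hg : g.HasFiniteSupport) : Summable (pairingDensity h w f g) := by
  have hdiag : Summable fun p : ℤ × ℤ => f p.1 * g p.1 * w p.2 :=
    summable_mul_of_summable_norm
      (summable_of_hasFiniteSupport ((hf.fun_mul_left g).fun_comp norm_zero)) hw.abs
  have hoff : Summable fun p : ℤ × ℤ => w p.2 * (f p.1 * g (p.1 - p.2)) := by
    refine summable_of_hasFiniteSupport <|
      ((hf.prod hg).image fun p : ℤ × ℤ => (p.1, p.1 - p.2)).subset fun p hp => ?_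
    simp only [mem_support, mul_ne_zero_iff] at hp
    exact ⟨(p.1, p.1 - p.2), ⟨hp.2.1, hp.2.2⟩, by simp⟩
  refine ((hdiag.sub hoff).mul_left h).congr fun p => ?_
  simp only [pairingDensity]
  ring

lemma energyDensity_eq_add_flip (hwsym : ∀ j, w (-j) = w j) (p : ℤ × ℤ) :
    energyDensity h w f g p = pairingDensity h w f g p + pairingDensity h w f g (bondFlip p) := by
  simp only [bondFlip_apply, energyDensity, pairingDensity, hwsym, sub_neg_eq_add, sub_add_cancel]
  ring

lemma summable_energyDensity (hwsym : ∀ j, w (-j) = w j) (hw : Summable w)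
    (hf : f.HasFiniteSupport) (hg : g.HasFiniteSupport) : Summable (energyDensity h w f g) := by
  have hpair := summable_pairingDensity (h := h) hw hf hg
  exact (hpair.add (bondFlip.summable_iff.mpr hpair)).congr fun p =>
    (energyDensity_eq_add_flip hwsym p).symm

lemma energyForm_eq_tsum_pairingDensity (hwsym : ∀ j, w (-j) = w j) (hw : Summable w)
    (hf : f.HasFiniteSupport) (hg : g.HasFiniteSupport) :
    energyForm h w f g = ∑' p, pairingDensity h w f g p := by
  have hpair := summable_pairingDensity (h := h) hw hf hg
  have hflip : Summable fun p => pairingDensity h w f g (bondFlip p) :=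
    bondFlip.summable_iff.mpr hpair
  rw [energyForm, tsum_congr (energyDensity_eq_add_flip hwsym), hpair.tsum_add hflip,
    bondFlip.tsum_eq]
  ring

lemma tsum_mul_discLap (hwsym : ∀ j, w (-j) = w j) (hw : Summable w)
    (hf : f.HasFiniteSupport) (hg : g.HasFiniteSupport) :
    ∑' i, h * f i * discLap w g i = energyForm h w f g := by
  rw [energyForm_eq_tsum_pairingDensity hwsym hw hf hg,
    (summable_pairingDensity hw hf hg).tsum_prod]
  refine tsum_congr fun i => ?_
  rw [discLap_eq_tsum, ← tsum_mul_left]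
  rfl

lemma two_mul_energyForm_le (hwsym : ∀ j, w (-j) = w j) (hw : Summable w) (hw0 : ∀ j, 0 ≤ w j)
    (hh : 0 ≤ h) (hf : f.HasFiniteSupport) (hg : g.HasFiniteSupport) :
    2 * energyForm h w f g ≤ energyForm h w f f + energyForm h w g g := by
  have hpoint (p : ℤ × ℤ) :
      2 * energyDensity h w f g p ≤ energyDensity h w f f p + energyDensity h w g g p := by
    have := mul_le_mul_of_nonneg_left
      (two_mul_le_add_sq (f p.1 - f (p.1 - p.2)) (g p.1 - g (p.1 - p.2)))
      (mul_nonneg hh (hw0 p.2))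
    simp only [energyDensity]
    linarith
  have hff := summable_energyDensity (h := h) hwsym hw hf hf
  have hgg := summable_energyDensity (h := h) hwsym hw hg hg
  have hsum := ((summable_energyDensity hwsym hw hf hg).mul_left 2).tsum_le_tsum hpoint
    (hff.add hgg)
  rw [tsum_mul_left, hff.tsum_add hgg] at hsum
  simp only [energyForm]
  linarith

lemma energyNorm_sq (hwsym : ∀ j, w (-j) = w j) (hw : Summable w) (hw0 : ∀ j, 0 ≤ w j)
    (hh : 0 ≤ h) (hf : f.HasFiniteSupport) : energyNorm h w f ^ 2 = energyForm h w f f := by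
  have hterm (i j : ℤ) :
      (if j = 0 then 0 else h * w j * (f i - f (i - j)) ^ 2) = energyDensity h w f f (i, j) := by
    split_ifs with hj <;> simp [energyDensity, hj, sq, mul_assoc]
  have hnonneg (p : ℤ × ℤ) : 0 ≤ energyDensity h w f f p := by
    rw [energyDensity, mul_assoc]
    exact mul_nonneg (mul_nonneg hh (hw0 _)) (mul_self_nonneg _)
  simp only [energyNorm, hterm]
  rw [Real.sq_sqrt (mul_nonneg one_half_pos.le
    (tsum_nonneg fun i => tsum_nonneg fun j => hnonneg (i, j))),
    energyForm, (summable_energyDensity hwsym hw hf hf).tsum_prod]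

end FiniteSupport

lemma tsum_eq_sum_Icc_of_vanish {M : ℤ} {F : ℤ → ℝ} (hF : ∀ i, M < |i| → F i = 0) :
    ∑' i, F i = ∑ i ∈ Finset.Icc (-M) M, F i :=
  tsum_eq_sum fun i hi => hF i (by rwa [Finset.mem_Icc, ← abs_le, not_le] at hi)

lemma hasFiniteSupport_of_vanish {M : ℤ} {F : ℤ → ℝ} (hF : ∀ i, M < |i| → F i = 0) :
    F.HasFiniteSupport :=
  (Finset.Icc (-M) M).finite_toSet.subset fun i hi => by
    by_contra hout
    rw [Finset.mem_coe, Finset.mem_Icc, ← abs_le, not_le] at hout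
    exact hi (hF i hout)

lemma lqNorm_rpow {h q : ℝ} (hh : 0 ≤ h) (hq : q ≠ 0) (f : ℤ → ℝ) :
    lqNorm h q f ^ q = ∑' i, h * |f i| ^ q := by
  rw [lqNorm, ← Real.rpow_mul (tsum_nonneg fun i => by positivity), one_div_mul_cancel hq,
    Real.rpow_one]

section SchemeStep

variable {h Δt r : ℝ} {M : ℤ} {w a b : ℤ → ℝ}

lemma sum_mul_opow_sub_eq {c : ℤ → ℝ} (hΔt : Δt ≠ 0) (hw : Summable w)
    (hwsym : ∀ j, w (-j) = w j) (hb : ∀ i, M < |i| → b i = 0) (hc : ∀ i, M < |i| → c i = 0)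
    (hstep : ∀ i, |i| ≤ M → (opow (b i) r - opow (a i) r) / Δt + discLap w b i = 0) :
    ∑ i ∈ Finset.Icc (-M) M, h * c i * (opow (b i) r - opow (a i) r) =
      -Δt * energyForm h w c b := by
  have hpoint (i : ℤ) :
      h * c i * (opow (b i) r - opow (a i) r) = -Δt * (h * c i * discLap w b i) := by
    rcases le_or_gt |i| M with hi | hi
    · rw [(div_eq_iff hΔt).mp (eq_neg_iff_add_eq_zero.mpr (hstep i hi))]
      ring
    · simp [hc i hi]
  rw [← tsum_eq_sum_Icc_of_vanish fun i hi => by simp [hc i hi], tsum_congr hpoint,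
    tsum_mul_left, tsum_mul_discLap hwsym hw (hasFiniteSupport_of_vanish hc)
      (hasFiniteSupport_of_vanish hb)]

lemma energy_step_bounds {p p' : ℝ} (hpp : p.HolderConjugate p') (hΔt : Δt ≠ 0) (hh : 0 ≤ h)
    (hw : Summable w) (hwsym : ∀ j, w (-j) = w j)
    (ha : ∀ i, M < |i| → a i = 0) (hb : ∀ i, M < |i| → b i = 0)
    (hstep : ∀ i, |i| ≤ M →
      (opow (b i) (p - 1) - opow (a i) (p - 1)) / Δt + discLap w b i = 0) :
    -Δt * energyForm h w a b ≤ 1 / p' * (lqNorm h p b ^ p - lqNorm h p a ^ p) ∧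
      1 / p' * (lqNorm h p b ^ p - lqNorm h p a ^ p) ≤ -Δt * energyForm h w b b := by
  have hzero (f : ℤ → ℝ) (hf : ∀ i, M < |i| → f i = 0) (i : ℤ) (hi : M < |i|) :
      h * |f i| ^ p = 0 := by
    simp [hf i hi, Real.zero_rpow hpp.ne_zero]
  have hdiff : 1 / p' * (lqNorm h p b ^ p - lqNorm h p a ^ p) =
      ∑ i ∈ Finset.Icc (-M) M, h * ((|b i| ^ p - |a i| ^ p) / p') := by
    rw [lqNorm_rpow hh hpp.ne_zero, lqNorm_rpow hh hpp.ne_zero,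
      tsum_eq_sum_Icc_of_vanish (hzero b hb), tsum_eq_sum_Icc_of_vanish (hzero a ha),
      ← Finset.sum_sub_distrib, Finset.mul_sum]
    exact Finset.sum_congr rfl fun i _ => by ring
  rw [hdiff, ← sum_mul_opow_sub_eq hΔt hw hwsym hb ha hstep,
    ← sum_mul_opow_sub_eq hΔt hw hwsym hb hb hstep]
  constructor <;> refine Finset.sum_le_sum fun i _ => ?_ <;> rw [mul_assoc]
  · exact mul_le_mul_of_nonneg_left (mul_opow_sub_le_div_conj_sub hpp _ _) hh
  · exact mul_le_mul_of_nonneg_left (div_conj_sub_le_mul_opow_sub hpp _ _) hh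

end SchemeStep

theorem stmt9_general (q Δt h : ℝ) (hq : 1 < q) (hΔt : 0 < Δt) (hh : 0 < h)
    (Mx : ℤ)
    (w : ℤ → ℝ) (hw0 : ∀ j : ℤ, 0 ≤ w j) (hwsym : ∀ j : ℤ, w (-j) = w j) (hwsum : Summable w)
    (u0 : ℤ → ℝ)
    (u : ℕ → ℤ → ℝ) (hu : IsFD q Δt w Mx u0 u) :
    ∀ n : ℕ,
      -(energyNorm h w (u n)) ^ 2 ≤
          (1 / (q / (q - 1))) * (lqNorm h q (u (n + 1)) ^ q - lqNorm h q (u n) ^ q) / Δt ∧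
        (1 / (q / (q - 1))) * (lqNorm h q (u (n + 1)) ^ q - lqNorm h q (u n) ^ q) / Δt ≤
          -(energyNorm h w (u (n + 1))) ^ 2 := by
  obtain ⟨-, hvanish, hstep⟩ := hu
  intro n
  have hsupp (m : ℕ) := hasFiniteSupport_of_vanish (hvanish m)
  have hpp : q.HolderConjugate (q / (q - 1)) := .conjExponent hq
  obtain ⟨hlower, hupper⟩ := energy_step_bounds hpp hΔt.ne' hh.le hwsum hwsym
    (hvanish n) (hvanish (n + 1)) (hstep n)
  have hcross : energyForm h w (u n) (u (n + 1)) ≤ energyForm h w (u n) (u n) := by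
    have hbb : energyForm h w (u (n + 1)) (u (n + 1)) ≤ energyForm h w (u n) (u (n + 1)) :=
      le_of_mul_le_mul_left (by linarith) hΔt
    linarith [two_mul_energyForm_le hwsym hwsum hw0 hh.le (hsupp n) (hsupp (n + 1))]
  rw [energyNorm_sq hwsym hwsum hw0 hh.le (hsupp n),
    energyNorm_sq hwsym hwsum hw0 hh.le (hsupp (n + 1)), le_div_iff₀ hΔt, div_le_iff₀ hΔt]
  constructor <;> nlinarith [mul_le_mul_of_nonneg_left hcross hΔt.le]

theorem stmt9 (q Δt h : ℝ) (hq : 1 < q) (hΔt : 0 < Δt) (hh : 0 < h)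
    (Mx : ℤ) (hMx : 1 ≤ Mx)
    (w : ℤ → ℝ) (hw0 : ∀ j : ℤ, 0 ≤ w j) (hwsym : ∀ j : ℤ, w (-j) = w j) (hwsum : Summable w)
    (u0 : ℤ → ℝ) (hu0 : ∀ i : ℤ, Mx < |i| → u0 i = 0)
    (u : ℕ → ℤ → ℝ) (hu : IsFD q Δt w Mx u0 u) :
    ∀ n : ℕ,
      -(energyNorm h w (u n)) ^ 2 ≤
          (1 / (q / (q - 1))) * (lqNorm h q (u (n + 1)) ^ q - lqNorm h q (u n) ^ q) / Δt ∧
        (1 / (q / (q - 1))) * (lqNorm h q (u (n + 1)) ^ q - lqNorm h q (u n) ^ q) / Δt ≤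
          -(energyNorm h w (u (n + 1))) ^ 2 :=
  stmt9_general q Δt h hq hΔt hh Mx w hw0 hwsym hwsum u0 u hu
end
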